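/- (Monotonicity in the current.) Let 0 < j ≤ j′ and let φ_t^{(j,δ,−)} and φ_t^{(j′,δ,−)} be the delta− interface evolutions with currents j and j′ respectively, started from initial interfaces φ ≥ ψ (both 1-Lipschitz, ≥ |r|, equal to |r| outside a compact). Then for all t ≥ 0: φ_t^{(j,δ,−)} − jt ≥ φ_t^{(j′,δ,−)} − j′t pointwise, for times t = kδ. -/

import Mathlib

/-!
The heat semigroup is integration against a Gaussian, so it is monotone, commutes with adding
constants, and preserves Lipschitz bounds (the last one because it averages translates); the cone
`|r| + c` is 1-Lipschitz, so every `φ_{kδ}` stays Lipschitz and all integrals involved converge.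
By induction on `k`, `ψ^{(j')}_{kδ} ≤ φ^{(j)}_{kδ} + (j' - j) k δ`: the heat step keeps the gap,
which only grows from `k` to `k + 1`, and the cones differ by exactly `(j' - j)(k + 1)δ`.
-/

open MeasureTheory

/-- The Gaussian heat kernel. -/
noncomputable def gaussK (t r r' : ℝ) : ℝ :=
  Real.exp (-(r - r') ^ 2 / (2 * t)) / Real.sqrt (2 * Real.pi * t)

/-- The heat semigroup applied to an interface. -/
noncomputable def heatEvol (t : ℝ) (f : ℝ → ℝ) (r : ℝ) : ℝ :=
  ∫ r', gaussK t r r' * f r'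

/-- The delta⁻ interface evolution with current `j`, sampled at times `kδ`. -/
noncomputable def deltaMinus (j δ : ℝ) (φ : ℝ → ℝ) : ℕ → ℝ → ℝ
  | 0 => φ
  | k + 1 => fun r =>
      max (heatEvol δ (deltaMinus j δ φ k) r) (|r| + ((k : ℝ) + 1) * j * δ)

open ProbabilityTheory NNReal

lemma LipschitzWith.integrable_of_integrable_id {α E : Type*} [NormedAddCommGroup α]
    [MeasurableSpace α] [OpensMeasurableSpace α] [NormedAddCommGroup E]
    [SecondCountableTopologyEither α E] {μ : Measure α} [IsFiniteMeasure μ] {K : ℝ≥0}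
    {f : α → E} (hf : LipschitzWith K f) (hμ : Integrable id μ) : Integrable f μ := by
  refine ((integrable_const ‖f 0‖).add (hμ.norm.const_mul K)).mono'
    hf.continuous.aestronglyMeasurable (ae_of_all _ fun x => ?_)
  have hx := hf.norm_sub_le x 0
  rw [sub_zero] at hx
  simp only [Pi.add_apply, id]
  linarith [norm_sub_norm_le (f x) (f 0)]

section Translate

variable {ν : Measure ℝ} [IsProbabilityMeasure ν] {K : ℝ≥0} {f : ℝ → ℝ}

lemma LipschitzWith.integrable_comp_add_right (hν : Integrable id ν) (hf : LipschitzWith K f)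
    (r : ℝ) : Integrable (fun x => f (x + r)) ν := by
  simpa [Function.comp_def] using
    (hf.comp (IsometryEquiv.addRight r).isometry.lipschitz).integrable_of_integrable_id hν

lemma LipschitzWith.integral_comp_add_right (hν : Integrable id ν) (hf : LipschitzWith K f) :
    LipschitzWith K fun r => ∫ x, f (x + r) ∂ν := by
  refine LipschitzWith.of_dist_le_mul fun r₁ r₂ => ?_
  have hpt : ∀ x, ‖f (x + r₁) - f (x + r₂)‖ ≤ K * dist r₁ r₂ := fun x => by
    simpa [← dist_eq_norm] using hf.dist_le_mul (x + r₁) (x + r₂)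
  rw [dist_eq_norm, ← integral_sub (hf.integrable_comp_add_right hν r₁)
    (hf.integrable_comp_add_right hν r₂)]
  simpa using norm_integral_le_of_norm_le_const (μ := ν) (ae_of_all _ hpt)

end Translate

lemma gaussK_eq_gaussianPDFReal {t : ℝ} (ht : 0 ≤ t) (r r' : ℝ) :
    gaussK t r r' = gaussianPDFReal r t.toNNReal r' := by
  rw [gaussK, gaussianPDFReal, Real.coe_toNNReal t ht, div_eq_inv_mul]
  ring_nf

lemma heatEvol_eq_integral_gaussianReal {t : ℝ} (ht : 0 < t) (f : ℝ → ℝ) (r : ℝ) :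
    heatEvol t f r = ∫ x, f (x + r) ∂gaussianReal 0 t.toNNReal := by
  have hv : t.toNNReal ≠ 0 := by simpa using ht
  rw [← (measurableEmbedding_addRight r).integral_map, gaussianReal_map_add_const, zero_add,
    integral_gaussianReal_eq_integral_smul hv, heatEvol]
  simp_rw [gaussK_eq_gaussianPDFReal ht.le, smul_eq_mul]

section HeatEvol

variable {t : ℝ} {K : ℝ≥0} {f : ℝ → ℝ}

lemma integrable_id_gaussianReal (μ : ℝ) (v : ℝ≥0) : Integrable id (gaussianReal μ v) :=
  (memLp_id_gaussianReal 1).integrable le_rfl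

lemma LipschitzWith.heatEvol (ht : 0 < t) (hf : LipschitzWith K f) :
    LipschitzWith K (heatEvol t f) := by
  rw [show _root_.heatEvol t f = _ from funext (heatEvol_eq_integral_gaussianReal ht f)]
  exact hf.integral_comp_add_right (integrable_id_gaussianReal 0 t.toNNReal)

lemma heatEvol_le_heatEvol_add {g : ℝ → ℝ} {K' : ℝ≥0} (ht : 0 < t) (hf : LipschitzWith K f)
    (hg : LipschitzWith K' g) {c : ℝ} (h : ∀ x, f x ≤ g x + c) (r : ℝ) :
    heatEvol t f r ≤ heatEvol t g r + c := by
  set ν := gaussianReal 0 t.toNNReal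
  have hfr := hf.integrable_comp_add_right (integrable_id_gaussianReal 0 t.toNNReal) r
  have hgr := hg.integrable_comp_add_right (integrable_id_gaussianReal 0 t.toNNReal) r
  rw [heatEvol_eq_integral_gaussianReal ht, heatEvol_eq_integral_gaussianReal ht]
  calc ∫ x, f (x + r) ∂ν
      ≤ ∫ x, (g (x + r) + c) ∂ν :=
        integral_mono hfr (hgr.add (integrable_const c)) fun x => h (x + r)
    _ = ∫ x, g (x + r) ∂ν + c := by
      rw [integral_add hgr (integrable_const c), integral_const, probReal_univ, one_smul]

end HeatEvol

section DeltaMinus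

variable {j δ : ℝ} {K : ℝ≥0} {φ : ℝ → ℝ}

lemma lipschitzWith_deltaMinus (hδ : 0 < δ) (hφ : LipschitzWith K φ) :
    ∀ k, LipschitzWith (max K 1) (deltaMinus j δ φ k)
  | 0 => hφ.weaken (le_max_left _ _)
  | k + 1 => by
    have hcone : LipschitzWith 1 fun r : ℝ => |r| + ((k : ℝ) + 1) * j * δ := by
      simpa [Real.norm_eq_abs] using
        lipschitzWith_one_norm.add (LipschitzWith.const (α := ℝ) (((k : ℝ) + 1) * j * δ))
    simpa [deltaMinus] using ((lipschitzWith_deltaMinus hδ hφ k).heatEvol hδ).max hcone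

theorem deltaMinus_le_deltaMinus_add {j' : ℝ} {ψ : ℝ → ℝ} {K' : ℝ≥0} (hjj' : j ≤ j')
    (hδ : 0 < δ) (hφ : LipschitzWith K φ) (hψ : LipschitzWith K' ψ) (hle : ∀ r, ψ r ≤ φ r) :
    ∀ (k : ℕ) (r : ℝ), deltaMinus j' δ ψ k r ≤ deltaMinus j δ φ k r + (j' - j) * (k * δ)
  | 0, r => by simpa [deltaMinus] using hle r
  | k + 1, r => by
    have hheat := heatEvol_le_heatEvol_add hδ (lipschitzWith_deltaMinus hδ hψ k)
      (lipschitzWith_deltaMinus hδ hφ k) (deltaMinus_le_deltaMinus_add hjj' hδ hφ hψ hle k) r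
    have hgap : (j' - j) * (k * δ) ≤ (j' - j) * ((k + 1) * δ) := by
      gcongr
      linarith
    simp only [deltaMinus, Nat.cast_succ]
    rw [← max_add_add_right]
    exact max_le_max (by linarith) (by linarith)

end DeltaMinus

theorem delta_monotone_in_current_general (j j' δ : ℝ) (hjj' : j ≤ j')
    (hδ : 0 < δ) (φ ψ : ℝ → ℝ)
    (hφlip : LipschitzWith 1 φ)
    (hψlip : LipschitzWith 1 ψ)
    (hle : ∀ r : ℝ, ψ r ≤ φ r) :
    ∀ (k : ℕ) (r : ℝ),
      deltaMinus j' δ ψ k r - j' * ((k : ℝ) * δ)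
        ≤ deltaMinus j δ φ k r - j * ((k : ℝ) * δ) := by
  intro k r
  linarith [deltaMinus_le_deltaMinus_add hjj' hδ hφlip hψlip hle k r]

/-- (Monotonicity in the current.) If `0 < j ≤ j'` and the initial interfaces
satisfy `φ ≥ ψ`, then at every time `t = kδ` the delta⁻ evolutions satisfy
`φ_t^{(j)} − jt ≥ ψ_t^{(j')} − j't` pointwise. -/
theorem delta_monotone_in_current (j j' δ : ℝ) (hj : 0 < j) (hjj' : j ≤ j')
    (hδ : 0 < δ) (φ ψ : ℝ → ℝ)
    (hφlip : LipschitzWith 1 φ) (hφge : ∀ r : ℝ, |r| ≤ φ r)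
    (hφcone : ∃ M : ℝ, ∀ r : ℝ, M ≤ |r| → φ r = |r|)
    (hψlip : LipschitzWith 1 ψ) (hψge : ∀ r : ℝ, |r| ≤ ψ r)
    (hψcone : ∃ M : ℝ, ∀ r : ℝ, M ≤ |r| → ψ r = |r|)
    (hle : ∀ r : ℝ, ψ r ≤ φ r) :
    ∀ (k : ℕ) (r : ℝ),
      deltaMinus j' δ ψ k r - j' * ((k : ℝ) * δ)
        ≤ deltaMinus j δ φ k r - j * ((k : ℝ) * δ) :=
  delta_monotone_in_current_general j j' δ hjj' hδ φ ψ hφlip hψlip hle
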